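/- arXiv:2302.00203 — 2 statements merged into one kernel-verified Lean document; each statement's English description precedes it below -/
import Mathlib

section
/- Let c_i ≤ C and c_j ≤ C be positive integers, let T_R be the geometric relation extractor T_R(X_i, X_j) = A_iᵀ ((w_i w_jᵀ) ⊙ D(X_i, X_j)) A_j with fixed A_i, A_j, w_i, w_j (where D(X_i, X_j)(p,q) = ‖X_i(:,p) − X_j(:,q)‖₂), and let T_S(X, s) = X · diag(s') be the geometric message scaler, where s' ∈ ℝ^{c_i} is the average pooling of s ∈ ℝ^C with window size C − c_i + 1 and stride 1. Fix hidden vectors h_i, h_j ∈ ℝ^{d'} and arbitrary functions φ_m : ℝ^{d'} × ℝ^{d'} × ℝ^{d×d} → ℝ^{m} and φ_x : ℝ^{m} → ℝ^{C}. Define m(X_i, X_j) = φ_m(h_i, h_j, T_R(X_i, X_j)/(‖T_R(X_i, X_j)‖_F + 1)) and the geometric message X_pair(X_i, X_j) = T_S(X_i − μ_j 1ᵀ, φ_x(m(X_i, X_j))) ∈ ℝ^{3×c_i}, where μ_j = (1/c_j) Σ_{k=1}^{c_j} X_j(:,k) ∈ ℝ³ is the column mean of X_j. Then for every real orthogonal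 3×3 matrix Q and every t ∈ ℝ³, X_pair(Q X_i + t 1ᵀ, Q X_j + t 1ᵀ) = Q · X_pair(X_i, X_j). -/
open Matrix BigOperators

noncomputable section

/-- Euclidean distance between the `p`-th column of `X` and the `q`-th column of `Y`. -/
def colDist {ci cj : ℕ} (X : Matrix (Fin 3) (Fin ci) ℝ) (Y : Matrix (Fin 3) (Fin cj) ℝ)
    (p : Fin ci) (q : Fin cj) : ℝ :=
  Real.sqrt (∑ r : Fin 3, (X r p - Y r q) ^ 2)

/-- Channel-wise distance matrix `D(X, Y)(p, q) = ‖X(:,p) − Y(:,q)‖₂`. -/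
def Dmat {ci cj : ℕ} (X : Matrix (Fin 3) (Fin ci) ℝ) (Y : Matrix (Fin 3) (Fin cj) ℝ) :
    Matrix (Fin ci) (Fin cj) ℝ :=
  Matrix.of fun p q => colDist X Y p q

/-- Rigid (Euclidean) action `g·X = QX + t1ᵀ`, acting columnwise by `x ↦ Qx + t`. -/
def rigid {c : ℕ} (Q : Matrix (Fin 3) (Fin 3) ℝ) (t : Fin 3 → ℝ)
    (X : Matrix (Fin 3) (Fin c) ℝ) : Matrix (Fin 3) (Fin c) ℝ :=
  Matrix.of fun r p => (∑ s : Fin 3, Q r s * X s p) + t r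

/-- Geometric relation extractor `T_R(X_i, X_j) = A_iᵀ ((w_i w_jᵀ) ⊙ D(X_i, X_j)) A_j`. -/
def TR {ci cj d : ℕ} (Ai : Matrix (Fin ci) (Fin d) ℝ) (Aj : Matrix (Fin cj) (Fin d) ℝ)
    (wi : Fin ci → ℝ) (wj : Fin cj → ℝ)
    (X : Matrix (Fin 3) (Fin ci) ℝ) (Y : Matrix (Fin 3) (Fin cj) ℝ) :
    Matrix (Fin d) (Fin d) ℝ :=
  Aiᵀ * (Matrix.of fun p q => wi p * wj q * Dmat X Y p q) * Aj

/-- Frobenius norm of a real matrix. -/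
def frob {n m : ℕ} (M : Matrix (Fin n) (Fin m) ℝ) : ℝ :=
  Real.sqrt (∑ i : Fin n, ∑ j : Fin m, (M i j) ^ 2)

/-- Average pooling of `s ∈ ℝ^C` with window size `C − c + 1` and stride 1. -/
def avgPool {c C : ℕ} (hc : c ≤ C) (s : Fin C → ℝ) : Fin c → ℝ :=
  fun k => (∑ m : Fin (C - c + 1), s ⟨k.val + m.val, by omega⟩) / ((C - c + 1 : ℕ) : ℝ)

/-- Geometric message scaler `T_S(X, s) = X · diag(s')`. -/
def TS {c C : ℕ} (hc : c ≤ C) (X : Matrix (Fin 3) (Fin c) ℝ) (s : Fin C → ℝ) :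
    Matrix (Fin 3) (Fin c) ℝ :=
  Matrix.of fun r p => X r p * avgPool hc s p

/-- The non-geometric message
`m(X_i, X_j) = φ_m(h_i, h_j, T_R(X_i, X_j) / (‖T_R(X_i, X_j)‖_F + 1))`. -/
def nonGeoMsg {ci cj d d' m' : ℕ}
    (Ai : Matrix (Fin ci) (Fin d) ℝ) (Aj : Matrix (Fin cj) (Fin d) ℝ)
    (wi : Fin ci → ℝ) (wj : Fin cj → ℝ)
    (φm : (Fin d' → ℝ) → (Fin d' → ℝ) → Matrix (Fin d) (Fin d) ℝ → (Fin m' → ℝ))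
    (hi hj : Fin d' → ℝ)
    (X : Matrix (Fin 3) (Fin ci) ℝ) (Y : Matrix (Fin 3) (Fin cj) ℝ) : Fin m' → ℝ :=
  φm hi hj ((frob (TR Ai Aj wi wj X Y) + 1)⁻¹ • TR Ai Aj wi wj X Y)

/-- The geometric message
`X_pair(X_i, X_j) = T_S(X_i − μ_j 1ᵀ, φ_x(m(X_i, X_j)))`, with `μ_j` the column mean of `X_j`. -/
def geoMsg {ci cj d d' m' C : ℕ} (hci : ci ≤ C)
    (Ai : Matrix (Fin ci) (Fin d) ℝ) (Aj : Matrix (Fin cj) (Fin d) ℝ)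
    (wi : Fin ci → ℝ) (wj : Fin cj → ℝ)
    (φm : (Fin d' → ℝ) → (Fin d' → ℝ) → Matrix (Fin d) (Fin d) ℝ → (Fin m' → ℝ))
    (φx : (Fin m' → ℝ) → (Fin C → ℝ))
    (hi hj : Fin d' → ℝ)
    (X : Matrix (Fin 3) (Fin ci) ℝ) (Y : Matrix (Fin 3) (Fin cj) ℝ) :
    Matrix (Fin 3) (Fin ci) ℝ :=
  TS hci (Matrix.of fun r p => X r p - (∑ q : Fin cj, Y r q) / (cj : ℝ))
    (φx (nonGeoMsg Ai Aj wi wj φm hi hj X Y))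

/-!
Orthogonal maps preserve column distances, so `T_R`, and with it the scalar message `m`, is
invariant under the rigid motion. The column mean moves as `μ ↦ Qμ + t`, so the translation
cancels in the centred coordinates `X_i − μ_j 1ᵀ`, which are simply multiplied by `Q`; and `T_S`
scales columns, i.e. multiplies on the right, which commutes with multiplication by `Q` on the left.
-/

theorem Matrix.mulVec_dotProduct_mulVec_self {m n R : Type*} [Fintype m] [Fintype n]
    [DecidableEq n] [CommSemiring R] {Q : Matrix m n R} (hQ : Qᵀ * Q = 1) (v : n → R) :
    Q *ᵥ v ⬝ᵥ Q *ᵥ v = v ⬝ᵥ v := by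
  rw [dotProduct_mulVec, ← vecMul_transpose, vecMul_vecMul, hQ, vecMul_one]

theorem Matrix.mul_replicateCol {l m n R : Type*} [Fintype m] [NonUnitalNonAssocSemiring R]
    (Q : Matrix l m R) (v : m → R) :
    Q * replicateCol n v = replicateCol n (Q *ᵥ v) :=
  rfl

section

variable {ci cj c C d d' m' : ℕ}

theorem rigid_eq_mul_add_replicateCol (Q : Matrix (Fin 3) (Fin 3) ℝ) (t : Fin 3 → ℝ)
    (X : Matrix (Fin 3) (Fin c) ℝ) : rigid Q t X = Q * X + replicateCol (Fin c) t :=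
  rfl

theorem colDist_eq_sqrt_dotProduct (X : Matrix (Fin 3) (Fin ci) ℝ)
    (Y : Matrix (Fin 3) (Fin cj) ℝ) (p : Fin ci) (q : Fin cj) :
    colDist X Y p q = √((Xᵀ p - Yᵀ q) ⬝ᵥ (Xᵀ p - Yᵀ q)) := by
  simp only [colDist, dotProduct, sq]
  rfl

theorem transpose_rigid_apply (Q : Matrix (Fin 3) (Fin 3) ℝ) (t : Fin 3 → ℝ)
    (X : Matrix (Fin 3) (Fin c) ℝ) (p : Fin c) : (rigid Q t X)ᵀ p = Q *ᵥ Xᵀ p + t :=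
  rfl

theorem colDist_rigid {Q : Matrix (Fin 3) (Fin 3) ℝ} (hQ : Qᵀ * Q = 1) (t : Fin 3 → ℝ)
    (X : Matrix (Fin 3) (Fin ci) ℝ) (Y : Matrix (Fin 3) (Fin cj) ℝ) (p : Fin ci) (q : Fin cj) :
    colDist (rigid Q t X) (rigid Q t Y) p q = colDist X Y p q := by
  rw [colDist_eq_sqrt_dotProduct, colDist_eq_sqrt_dotProduct, transpose_rigid_apply,
    transpose_rigid_apply, add_sub_add_right_eq_sub, ← mulVec_sub,
    mulVec_dotProduct_mulVec_self hQ]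

theorem TR_rigid {Q : Matrix (Fin 3) (Fin 3) ℝ} (hQ : Qᵀ * Q = 1) (t : Fin 3 → ℝ)
    (Ai : Matrix (Fin ci) (Fin d) ℝ) (Aj : Matrix (Fin cj) (Fin d) ℝ)
    (wi : Fin ci → ℝ) (wj : Fin cj → ℝ) (X : Matrix (Fin 3) (Fin ci) ℝ)
    (Y : Matrix (Fin 3) (Fin cj) ℝ) :
    TR Ai Aj wi wj (rigid Q t X) (rigid Q t Y) = TR Ai Aj wi wj X Y := by
  simp only [TR, Dmat, of_apply, colDist_rigid hQ t]

theorem nonGeoMsg_rigid {Q : Matrix (Fin 3) (Fin 3) ℝ} (hQ : Qᵀ * Q = 1) (t : Fin 3 → ℝ)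
    (Ai : Matrix (Fin ci) (Fin d) ℝ) (Aj : Matrix (Fin cj) (Fin d) ℝ)
    (wi : Fin ci → ℝ) (wj : Fin cj → ℝ)
    (φm : (Fin d' → ℝ) → (Fin d' → ℝ) → Matrix (Fin d) (Fin d) ℝ → (Fin m' → ℝ))
    (hi hj : Fin d' → ℝ) (X : Matrix (Fin 3) (Fin ci) ℝ) (Y : Matrix (Fin 3) (Fin cj) ℝ) :
    nonGeoMsg Ai Aj wi wj φm hi hj (rigid Q t X) (rigid Q t Y)
      = nonGeoMsg Ai Aj wi wj φm hi hj X Y := by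
  rw [nonGeoMsg, nonGeoMsg, TR_rigid hQ]

def colMean (Y : Matrix (Fin 3) (Fin cj) ℝ) : Fin 3 → ℝ :=
  fun r => (∑ q, Y r q) / cj

theorem colMean_rigid (hcj : cj ≠ 0) (Q : Matrix (Fin 3) (Fin 3) ℝ) (t : Fin 3 → ℝ)
    (Y : Matrix (Fin 3) (Fin cj) ℝ) : colMean (rigid Q t Y) = Q *ᵥ colMean Y + t := by
  ext r
  simp only [colMean, rigid, of_apply, Pi.add_apply, mulVec, dotProduct,
    Finset.sum_add_distrib, Finset.sum_const, Finset.card_univ, Fintype.card_fin, nsmul_eq_mul]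
  rw [add_div, mul_div_cancel_left₀ _ (Nat.cast_ne_zero.mpr hcj), Finset.sum_comm,
    Finset.sum_div]
  simp only [Finset.mul_sum, Finset.sum_div, mul_div_assoc]

theorem TS_eq_mul_diagonal (hc : c ≤ C) (X : Matrix (Fin 3) (Fin c) ℝ) (s : Fin C → ℝ) :
    TS hc X s = X * diagonal (avgPool hc s) := by
  ext r p
  simp only [TS, of_apply, mul_diagonal]

theorem TS_mul_left (hc : c ≤ C) (Q : Matrix (Fin 3) (Fin 3) ℝ) (X : Matrix (Fin 3) (Fin c) ℝ)
    (s : Fin C → ℝ) : TS hc (Q * X) s = Q * TS hc X s := by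
  rw [TS_eq_mul_diagonal, TS_eq_mul_diagonal, Matrix.mul_assoc]

theorem geoMsg_eq_TS (hci : ci ≤ C) (Ai : Matrix (Fin ci) (Fin d) ℝ)
    (Aj : Matrix (Fin cj) (Fin d) ℝ) (wi : Fin ci → ℝ) (wj : Fin cj → ℝ)
    (φm : (Fin d' → ℝ) → (Fin d' → ℝ) → Matrix (Fin d) (Fin d) ℝ → (Fin m' → ℝ))
    (φx : (Fin m' → ℝ) → (Fin C → ℝ)) (hi hj : Fin d' → ℝ)
    (X : Matrix (Fin 3) (Fin ci) ℝ) (Y : Matrix (Fin 3) (Fin cj) ℝ) :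
    geoMsg hci Ai Aj wi wj φm φx hi hj X Y
      = TS hci (X - replicateCol (Fin ci) (colMean Y))
          (φx (nonGeoMsg Ai Aj wi wj φm hi hj X Y)) :=
  rfl

end

theorem geoMsg_rigid_equivariant_general {ci cj d d' m' C : ℕ}
    (hcjpos : 0 < cj) (hci : ci ≤ C)
    (Ai : Matrix (Fin ci) (Fin d) ℝ) (Aj : Matrix (Fin cj) (Fin d) ℝ)
    (wi : Fin ci → ℝ) (wj : Fin cj → ℝ)
    (φm : (Fin d' → ℝ) → (Fin d' → ℝ) → Matrix (Fin d) (Fin d) ℝ → (Fin m' → ℝ))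
    (φx : (Fin m' → ℝ) → (Fin C → ℝ))
    (hi hj : Fin d' → ℝ)
    (X : Matrix (Fin 3) (Fin ci) ℝ) (Y : Matrix (Fin 3) (Fin cj) ℝ)
    (Q : Matrix (Fin 3) (Fin 3) ℝ) (hQ : Qᵀ * Q = 1) (t : Fin 3 → ℝ) :
    geoMsg hci Ai Aj wi wj φm φx hi hj (rigid Q t X) (rigid Q t Y)
      = Q * geoMsg hci Ai Aj wi wj φm φx hi hj X Y := by
  have hcentered : rigid Q t X - replicateCol (Fin ci) (colMean (rigid Q t Y))
      = Q * (X - replicateCol (Fin ci) (colMean Y)) := by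
    rw [colMean_rigid hcjpos.ne' Q t Y, rigid_eq_mul_add_replicateCol, replicateCol_add,
      Matrix.mul_sub, mul_replicateCol]
    abel
  rw [geoMsg_eq_TS, geoMsg_eq_TS, nonGeoMsg_rigid hQ, hcentered, TS_mul_left]

/-- The geometric message is O(3)-equivariant (translations cancel):
`X_pair(QX_i + t1ᵀ, QX_j + t1ᵀ) = Q · X_pair(X_i, X_j)`. -/
theorem geoMsg_rigid_equivariant {ci cj d d' m' C : ℕ}
    (hcipos : 0 < ci) (hcjpos : 0 < cj) (hci : ci ≤ C) (hcj : cj ≤ C)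
    (Ai : Matrix (Fin ci) (Fin d) ℝ) (Aj : Matrix (Fin cj) (Fin d) ℝ)
    (wi : Fin ci → ℝ) (wj : Fin cj → ℝ)
    (φm : (Fin d' → ℝ) → (Fin d' → ℝ) → Matrix (Fin d) (Fin d) ℝ → (Fin m' → ℝ))
    (φx : (Fin m' → ℝ) → (Fin C → ℝ))
    (hi hj : Fin d' → ℝ)
    (X : Matrix (Fin 3) (Fin ci) ℝ) (Y : Matrix (Fin 3) (Fin cj) ℝ)
    (Q : Matrix (Fin 3) (Fin 3) ℝ) (hQ : Qᵀ * Q = 1) (t : Fin 3 → ℝ) :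
    geoMsg hci Ai Aj wi wj φm φx hi hj (rigid Q t X) (rigid Q t Y)
      = Q * geoMsg hci Ai Aj wi wj φm φx hi hj X Y :=
  geoMsg_rigid_equivariant_general hcjpos hci Ai Aj wi wj φm φx hi hj X Y Q hQ t

end
end

section
/- Let ι (paratope indices) and κ (antibody indices) be finite index sets; for each i ∈ ι let P_i, S_i ∈ ℝ^{3×k_i} be multi-channel coordinate matrices of the same shape (native and shadow paratope coordinates), and for each j ∈ κ let X_j ∈ ℝ^{3×c_j} (antibody coordinates). Suppose (Q₀, t₀) ∈ O(3) × ℝ³ is a global minimizer of the alignment loss L_{P,S}(Q, t) = Σ_{i∈ι} ‖Q P_i + t 1ᵀ − S_i‖_F², and define the docked coordinates X̃_j = Q₀ X_j + t₀ 1ᵀ. Fix Q₁, Q₂ ∈ O(3) and t₁, t₂ ∈ ℝ³, and set P'_i = Q₂ P_i + t₂ 1ᵀ, S'_i = Q₁ S_i + t₁ 1ᵀ, X'_j = Q₂ X_j + t₂ 1ᵀ. Then (Q', t') := (Q₁ Q₀ Q₂ᵀ, Q₁ t₀ + t₁ − Q₁ Q₀ Q₂ᵀ t₂) is a global minimizer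 of L_{P',S'} over O(3) × ℝ³, and Q' X'_j + t' 1ᵀ = Q₁ X̃_j + t₁ 1ᵀ for every j ∈ κ; that is, the docking procedure is E(3)-equivariant with respect to the transformation applied to the shadow paratope. -/
open Matrix BigOperators

noncomputable section

/-- Alignment loss `L_{P,S}(Q, t) = Σ_i ‖Q P_i + t 1ᵀ − S_i‖_F²`. -/
def alignLoss {ι : Type*} [Fintype ι] {k : ι → ℕ}
    (P S : (i : ι) → Matrix (Fin 3) (Fin (k i)) ℝ)
    (Q : Matrix (Fin 3) (Fin 3) ℝ) (t : Fin 3 → ℝ) : ℝ :=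
  ∑ i, ∑ r : Fin 3, ∑ p : Fin (k i), (rigid Q t (P i) r p - S i r p) ^ 2

/-- `(Q, t)` is a global minimizer of the alignment loss `L_{P,S}` over `O(3) × ℝ³`. -/
def IsKabschMin {ι : Type*} [Fintype ι] {k : ι → ℕ}
    (P S : (i : ι) → Matrix (Fin 3) (Fin (k i)) ℝ)
    (Q : Matrix (Fin 3) (Fin 3) ℝ) (t : Fin 3 → ℝ) : Prop :=
  Qᵀ * Q = 1 ∧ ∀ (Q' : Matrix (Fin 3) (Fin 3) ℝ) (t' : Fin 3 → ℝ), Q'ᵀ * Q' = 1 →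
    alignLoss P S Q t ≤ alignLoss P S Q' t'

/-!
Both the loss and the docking map are built from the rigid action `X ↦ QX + t1ᵀ` of `E(3)`.
Moving the data by `g₂` on the paratope side and by `g₁` on the shadow side changes the loss only
by reparametrisation: `L_{g₂P, g₁S}(g) = L_{P,S}(g₁⁻¹ g g₂)`, since `g₁` acts on residuals by the
isometry `Q₁`. As `g ↦ g₁⁻¹ g g₂` is a bijection of `E(3)`, the minimiser `g₀` of `L_{P,S}`
is carried to the minimiser `g₁ g₀ g₂⁻¹` of `L_{g₂P, g₁S}`, and `(g₁ g₀ g₂⁻¹) g₂ = g₁ g₀`.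
-/

lemma rigid_eq_mul_add {c : ℕ} (Q : Matrix (Fin 3) (Fin 3) ℝ) (t : Fin 3 → ℝ)
    (X : Matrix (Fin 3) (Fin c) ℝ) :
    rigid Q t X = Q * X + Matrix.of fun r _ => t r := by
  ext r p
  simp [rigid, mul_apply]

lemma rigid_rigid {c : ℕ} (Qa Qb : Matrix (Fin 3) (Fin 3) ℝ) (ta tb : Fin 3 → ℝ)
    (X : Matrix (Fin 3) (Fin c) ℝ) :
    rigid Qa ta (rigid Qb tb X) = rigid (Qa * Qb) (Qa *ᵥ tb + ta) X := by
  rw [rigid_eq_mul_add, rigid_eq_mul_add, rigid_eq_mul_add, Matrix.mul_add, ← Matrix.mul_assoc,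
    add_assoc]
  -- `Qa * of (fun r _ => tb r)` unfolds to the broadcast of `Qa *ᵥ tb`
  rfl

lemma rigid_sub_rigid {c : ℕ} (Q : Matrix (Fin 3) (Fin 3) ℝ) (t : Fin 3 → ℝ)
    (Y Z : Matrix (Fin 3) (Fin c) ℝ) :
    rigid Q t Y - rigid Q t Z = Q * (Y - Z) := by
  rw [rigid_eq_mul_add, rigid_eq_mul_add, Matrix.mul_sub]
  abel

lemma sum_sq_eq_trace_transpose_mul {m n : Type*} [Fintype m] [Fintype n]
    (M : Matrix m n ℝ) :
    ∑ r, ∑ p, M r p ^ 2 = trace (Mᵀ * M) := by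
  simp only [trace, diag, mul_apply, transpose_apply, sq]
  exact Finset.sum_comm

lemma sum_sq_mul_of_mem_orthogonalGroup {m n : Type*} [Fintype m] [DecidableEq m] [Fintype n]
    {R : Matrix m m ℝ} (hR : R ∈ orthogonalGroup m ℝ) (M : Matrix m n ℝ) :
    ∑ r, ∑ p, (R * M) r p ^ 2 = ∑ r, ∑ p, M r p ^ 2 := by
  rw [sum_sq_eq_trace_transpose_mul, sum_sq_eq_trace_transpose_mul, transpose_mul,
    Matrix.mul_assoc, ← Matrix.mul_assoc Rᵀ, (mem_orthogonalGroup_iff' _ _).1 hR, Matrix.one_mul]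

lemma alignLoss_rigid_rigid {ι : Type*} [Fintype ι] {k : ι → ℕ}
    (P S : (i : ι) → Matrix (Fin 3) (Fin (k i)) ℝ) {Q₁ : Matrix (Fin 3) (Fin 3) ℝ}
    (hQ₁ : Q₁ ∈ orthogonalGroup (Fin 3) ℝ) (Q₂ : Matrix (Fin 3) (Fin 3) ℝ) (t₁ t₂ : Fin 3 → ℝ)
    (Q : Matrix (Fin 3) (Fin 3) ℝ) (t : Fin 3 → ℝ) :
    alignLoss (fun i => rigid Q₂ t₂ (P i)) (fun i => rigid Q₁ t₁ (S i)) Q t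
      = alignLoss P S (Q₁ᵀ * Q * Q₂) (Q₁ᵀ *ᵥ (Q *ᵥ t₂ + t - t₁)) := by
  have hQ₁Q₁t : Q₁ * Q₁ᵀ = 1 := (mem_orthogonalGroup_iff _ _).1 hQ₁
  have hfactor : ∀ i, rigid Q t (rigid Q₂ t₂ (P i))
      = rigid Q₁ t₁ (rigid (Q₁ᵀ * Q * Q₂) (Q₁ᵀ *ᵥ (Q *ᵥ t₂ + t - t₁)) (P i)) := fun i => by
    rw [rigid_rigid, rigid_rigid, ← Matrix.mul_assoc, ← Matrix.mul_assoc, hQ₁Q₁t,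
      Matrix.one_mul, mulVec_mulVec, hQ₁Q₁t, one_mulVec, sub_add_cancel]
  unfold alignLoss
  refine Finset.sum_congr rfl fun i _ => ?_
  have hresidual := sum_sq_mul_of_mem_orthogonalGroup hQ₁
    (rigid (Q₁ᵀ * Q * Q₂) (Q₁ᵀ *ᵥ (Q *ᵥ t₂ + t - t₁)) (P i) - S i)
  rw [← rigid_sub_rigid Q₁ t₁] at hresidual
  simpa only [hfactor, Matrix.sub_apply] using hresidual

theorem docking_E3_equivariant_general {ι κ : Type*} [Fintype ι]
    {k : ι → ℕ} {c : κ → ℕ}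
    (P S : (i : ι) → Matrix (Fin 3) (Fin (k i)) ℝ)
    (X : (j : κ) → Matrix (Fin 3) (Fin (c j)) ℝ)
    (Q₀ : Matrix (Fin 3) (Fin 3) ℝ) (t₀ : Fin 3 → ℝ)
    (hmin : IsKabschMin P S Q₀ t₀)
    (Q₁ Q₂ : Matrix (Fin 3) (Fin 3) ℝ)
    (hQ₁ : Q₁ᵀ * Q₁ = 1) (hQ₂ : Q₂ᵀ * Q₂ = 1)
    (t₁ t₂ : Fin 3 → ℝ) :
    IsKabschMin (fun i => rigid Q₂ t₂ (P i)) (fun i => rigid Q₁ t₁ (S i))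
        (Q₁ * Q₀ * Q₂ᵀ) (Q₁.mulVec t₀ + t₁ - (Q₁ * Q₀ * Q₂ᵀ).mulVec t₂) ∧
      ∀ j : κ, rigid (Q₁ * Q₀ * Q₂ᵀ) (Q₁.mulVec t₀ + t₁ - (Q₁ * Q₀ * Q₂ᵀ).mulVec t₂)
          (rigid Q₂ t₂ (X j))
        = rigid Q₁ t₁ (rigid Q₀ t₀ (X j)) := by
  obtain ⟨hQ₀, hle⟩ := hmin
  have hO : ∀ {Q : Matrix (Fin 3) (Fin 3) ℝ}, Qᵀ * Q = 1 ↔ Q ∈ orthogonalGroup (Fin 3) ℝ :=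
    (mem_orthogonalGroup_iff' _ _).symm
  have hO₁ := hO.1 hQ₁
  have hO₂ := hO.1 hQ₂
  have hO₂t : Q₂ᵀ ∈ orthogonalGroup (Fin 3) ℝ := transpose_mem_unitaryGroup_iff.2 hO₂
  set Q := Q₁ * Q₀ * Q₂ᵀ
  set t := Q₁ *ᵥ t₀ + t₁ - Q *ᵥ t₂
  have hQQ₂ : Q * Q₂ = Q₁ * Q₀ := by rw [Matrix.mul_assoc, hQ₂, Matrix.mul_one]
  have ht : Q *ᵥ t₂ + t = Q₁ *ᵥ t₀ + t₁ := add_sub_cancel _ _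
  refine ⟨⟨hO.2 (mul_mem (mul_mem hO₁ (hO.1 hQ₀)) hO₂t), fun Q' t' hQ' => ?_⟩,
    fun j => by rw [rigid_rigid, rigid_rigid, hQQ₂, ht]⟩
  have hpullback_Q : Q₁ᵀ * Q * Q₂ = Q₀ := by
    rw [Matrix.mul_assoc, hQQ₂, ← Matrix.mul_assoc, hQ₁, Matrix.one_mul]
  have hpullback_t : Q₁ᵀ *ᵥ (Q *ᵥ t₂ + t - t₁) = t₀ := by
    rw [ht, add_sub_cancel_right, mulVec_mulVec, hQ₁, one_mulVec]
  rw [alignLoss_rigid_rigid P S hO₁, alignLoss_rigid_rigid P S hO₁, hpullback_Q, hpullback_t]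
  exact hle _ _ (hO.2 (mul_mem (mul_mem (transpose_mem_unitaryGroup_iff.2 hO₁) (hO.1 hQ')) hO₂))

/-- E(3)-equivariance of the docking procedure: if `(Q₀, t₀)` minimizes the alignment of the
native paratope `P` onto the shadow paratope `S`, and the docked antibody coordinates are
`X̃_j = Q₀ X_j + t₀ 1ᵀ`, then after transforming the antibody side by `(Q₂, t₂)` and the
shadow side by `(Q₁, t₁)`, the pair `(Q₁ Q₀ Q₂ᵀ, Q₁ t₀ + t₁ − Q₁ Q₀ Q₂ᵀ t₂)` minimizes the
transformed alignment loss and its docked coordinates equal `Q₁ X̃_j + t₁ 1ᵀ`. -/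
theorem docking_E3_equivariant {ι κ : Type*} [Fintype ι] [Fintype κ]
    {k : ι → ℕ} {c : κ → ℕ}
    (P S : (i : ι) → Matrix (Fin 3) (Fin (k i)) ℝ)
    (X : (j : κ) → Matrix (Fin 3) (Fin (c j)) ℝ)
    (Q₀ : Matrix (Fin 3) (Fin 3) ℝ) (t₀ : Fin 3 → ℝ)
    (hmin : IsKabschMin P S Q₀ t₀)
    (Q₁ Q₂ : Matrix (Fin 3) (Fin 3) ℝ)
    (hQ₁ : Q₁ᵀ * Q₁ = 1) (hQ₂ : Q₂ᵀ * Q₂ = 1)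
    (t₁ t₂ : Fin 3 → ℝ) :
    IsKabschMin (fun i => rigid Q₂ t₂ (P i)) (fun i => rigid Q₁ t₁ (S i))
        (Q₁ * Q₀ * Q₂ᵀ) (Q₁.mulVec t₀ + t₁ - (Q₁ * Q₀ * Q₂ᵀ).mulVec t₂) ∧
      ∀ j : κ, rigid (Q₁ * Q₀ * Q₂ᵀ) (Q₁.mulVec t₀ + t₁ - (Q₁ * Q₀ * Q₂ᵀ).mulVec t₂)
          (rigid Q₂ t₂ (X j))
        = rigid Q₁ t₁ (rigid Q₀ t₀ (X j)) :=
  docking_E3_equivariant_general P S X Q₀ t₀ hmin Q₁ Q₂ hQ₁ hQ₂ t₁ t₂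

end
end
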